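/- Let p ∈ [1,2], a = 2^{(2p-1)/2}, α_k = (1/a)((k+p)/p)^{p-1}, B_k = a α_k², and β_k = L + (bσ/R)(k+p+1)^{(2p-1)/2} with b, σ, R > 0 and L ≥ 0. Then for every k ≥ 1: α_k² β_k ≤ B_k β_{k-1} and B_k β_{k-1} ≤ A_k β_{k-1}, where A_k = Σ_{i=0}^k α_i. -/

import Mathlib

/-!
Since `k + p + 1 ≤ 2 (k + p)`, one has `β_k ≤ 2^{(2p-1)/2} β_{k-1} = a β_{k-1}`, which is the
first inequality. For the second, `a B_k = x^{2p-2} ≤ x^p` with `x = (k+p)/p ≥ 1` because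
`p ≤ 2`, and the tangent-line (Bernoulli) inequality for `t ↦ t^p` telescopes to
`x^p ≤ Σ_{i ≤ k} ((i+p)/p)^{p-1} = a A_k`.
-/

open Finset

namespace Real

theorem rpow_sub_rpow_le_mul_rpow_sub_one_mul {p x y : ℝ} (hp : 1 ≤ p) (hx : 0 < x)
    (hy : 0 ≤ y) : x ^ p - y ^ p ≤ p * x ^ (p - 1) * (x - y) := by
  have hbernoulli : 1 + p * (y / x - 1) ≤ (y / x) ^ p := by
    simpa using one_add_mul_self_le_rpow_one_add (s := y / x - 1)
      (by linarith [div_nonneg hy hx.le]) hp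
  calc x ^ p - y ^ p = x ^ p * (1 - (y / x) ^ p) := by
        rw [div_rpow hy hx.le]; field_simp [(rpow_pos_of_pos hx p).ne']
    _ ≤ x ^ p * (p * (1 - y / x)) := by gcongr; linarith
    _ = p * x ^ (p - 1) * (x - y) := by rw [rpow_sub_one hx.ne']; field_simp

theorem rpow_le_sum_range_rpow_sub_one {p : ℝ} (hp : 1 ≤ p) (k : ℕ) :
    (((k : ℝ) + p) / p) ^ p ≤ ∑ i ∈ range (k + 1), (((i : ℝ) + p) / p) ^ (p - 1) := by
  have hp0 : 0 < p := one_pos.trans_le hp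
  induction k with
  | zero => simp [div_self hp0.ne']
  | succ n ih =>
    have htangent := rpow_sub_rpow_le_mul_rpow_sub_one_mul hp
      (x := ((n + 1 : ℝ) + p) / p) (y := ((n : ℝ) + p) / p) (by positivity) (by positivity)
    have hstep : p * (((n + 1 : ℝ) + p) / p) ^ (p - 1) *
        (((n + 1 : ℝ) + p) / p - ((n : ℝ) + p) / p) = (((n + 1 : ℝ) + p) / p) ^ (p - 1) := by
      field_simp; ring
    rw [sum_range_succ]
    push_cast
    linarith

theorem rpow_sub_one_sq_le_rpow {p x : ℝ} (hp : p ≤ 2) (hx : 1 ≤ x) :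
    (x ^ (p - 1)) ^ 2 ≤ x ^ p := by
  rw [← rpow_natCast, ← rpow_mul (zero_le_one.trans hx)]
  exact rpow_le_rpow_of_exponent_le hx (by push_cast; linarith)

theorem add_mul_rpow_add_one_le {L c s t : ℝ} (hL : 0 ≤ L) (hc : 0 ≤ c) (hs : 0 ≤ s)
    (ht : 1 ≤ t) : L + c * (t + 1) ^ s ≤ 2 ^ s * (L + c * t ^ s) := by
  have htwo : 1 ≤ (2 : ℝ) ^ s := one_le_rpow (by norm_num) hs
  have hpow : (t + 1) ^ s ≤ 2 ^ s * t ^ s := by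
    rw [← mul_rpow (by norm_num) (by linarith)]
    exact rpow_le_rpow (by linarith) (by linarith) hs
  nlinarith [mul_le_mul_of_nonneg_left hpow hc]

end Real

open Real

/-- With `a = 2^((2p-1)/2)`, `α_k = (1/a)((k+p)/p)^(p-1)`, `B_k = a α_k²`,
`β_k = L + (bσ/R)(k+p+1)^((2p-1)/2)`, for every `k ≥ 1`:
`α_k² β_k ≤ B_k β_{k-1}` and `B_k β_{k-1} ≤ A_k β_{k-1}`. -/
theorem stmt_5 (p b σ R L : ℝ) (hp1 : 1 ≤ p) (hp2 : p ≤ 2)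
    (hb : 0 < b) (hσ : 0 < σ) (hR : 0 < R) (hL : 0 ≤ L)
    (a : ℝ) (haa : a = (2 : ℝ) ^ ((2 * p - 1) / 2))
    (α : ℕ → ℝ) (hα : ∀ i, α i = (1 / a) * (((i : ℝ) + p) / p) ^ (p - 1))
    (B : ℕ → ℝ) (hB : ∀ i, B i = a * (α i) ^ 2)
    (β : ℕ → ℝ) (hβ : ∀ i, β i = L + b * σ / R * ((i : ℝ) + p + 1) ^ ((2 * p - 1) / 2))
    (A : ℕ → ℝ) (hA : ∀ k, A k = ∑ i ∈ range (k + 1), α i) :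
    ∀ k : ℕ, 1 ≤ k →
      (α k) ^ 2 * β k ≤ B k * β (k - 1) ∧ B k * β (k - 1) ≤ A k * β (k - 1) := by
  intro k hk
  obtain ⟨m, rfl⟩ := Nat.exists_eq_add_of_le' hk
  have hs : 0 ≤ (2 * p - 1) / 2 := by linarith
  have ha : 0 < a := haa ▸ rpow_pos_of_pos two_pos _
  have hβ_nonneg : 0 ≤ β m := hβ m ▸ by positivity
  have hβ_succ : β (m + 1) ≤ a * β m := by
    rw [hβ, hβ, haa]
    convert add_mul_rpow_add_one_le hL (c := b * σ / R) (by positivity) hs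
      (t := (m : ℝ) + p + 1) (by linarith [m.cast_nonneg (α := ℝ)]) using 4
    push_cast; ring
  have hBA : B (m + 1) ≤ A (m + 1) := by
    have hx : 1 ≤ (((m + 1 : ℕ) : ℝ) + p) / p := by
      rw [le_div_iff₀ (by linarith)]; linarith [(m + 1).cast_nonneg (α := ℝ)]
    have hBx : B (m + 1) = 1 / a * ((((((m + 1 : ℕ) : ℝ) + p) / p) ^ (p - 1)) ^ 2) := by
      rw [hB, hα]; field_simp
    rw [hBx, hA, sum_congr rfl fun i _ => hα i, ← mul_sum]
    gcongr
    exact (rpow_sub_one_sq_le_rpow hp2 hx).trans (rpow_le_sum_range_rpow_sub_one hp1 _)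
  refine ⟨?_, mul_le_mul_of_nonneg_right hBA hβ_nonneg⟩
  rw [hB, Nat.add_sub_cancel, mul_comm a, mul_assoc]
  exact mul_le_mul_of_nonneg_left hβ_succ (sq_nonneg _)
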